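/- Let k be a field of characteristic zero, λ₀,…,λ_{n-1} distinct in k, m a positive integer, and coefficients c_{ij} ∈ k determined by the column relations (c_{0j},…,c_{m-1,j})ᵀ = Λ_j⁻¹ (a_{0j},…,a_{m-1,j})ᵀ. Then the polynomial r(x) = ∑_{j=0}^{n-1} ∑_{i=0}^{m-1} c_{ij} (x-λ_j)^i L_j(x)/i! satisfies, for each j and each 0 ≤ i ≤ m-1, r^{(i)}(λ_j) = ∑_{s=0}^{i} c_{sj} binom(i,s) L_j^{(i-s)}(λ_j). -/
import Mathlib


open Polynomial

lemma eval_iter_deriv_X_sub_pow {k : Type*} [Field k] (a : k) (N d : ℕ) :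
    (Polynomial.derivative^[d] ((X - C a) ^ N)).eval a
      = if N = d then (N.factorial : k) else 0 := by
  rw [iterate_derivative_X_sub_pow, nsmul_eq_mul]
  simp only [eval_mul, eval_natCast, eval_pow, eval_sub, eval_X, eval_C, sub_self]
  rcases lt_trichotomy N d with h | h | h
  · simp [Nat.descFactorial_eq_zero_iff_lt.2 h, h.ne]
  · simp [h, Nat.descFactorial_self]
  · rw [zero_pow (by omega), if_neg (by omega), mul_zero]

lemma eval_iter_deriv_zero_of_dvd {k : Type*} [Field k] {a : k} {m d : ℕ}
    {p : Polynomial k} (hdvd : (X - C a) ^ m ∣ p) (hd : d < m) :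
    (Polynomial.derivative^[d] p).eval a = 0 := by
  obtain ⟨q, rfl⟩ := hdvd
  rw [iterate_derivative_mul, eval_finset_sum]
  refine Finset.sum_eq_zero fun s hs => ?_
  rw [nsmul_eq_mul, eval_mul, eval_mul, eval_iter_deriv_X_sub_pow,
    if_neg (by simp at hs; omega), zero_mul, mul_zero]

lemma diag_term {k : Type*} [Field k] [CharZero k] (a c : k) (L : Polynomial k) (i i' : ℕ) :
    (Polynomial.derivative^[i]
        (C c * (C ((i'.factorial : k)⁻¹) * (X - C a) ^ i' * L))).eval a
      = if i' ≤ i then c * (i.choose i' : k) * (Polynomial.derivative^[i - i'] L).eval a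
        else 0 := by
  have h1 : C c * (C ((i'.factorial : k)⁻¹) * (X - C a) ^ i' * L)
      = C (c * (i'.factorial : k)⁻¹) * ((X - C a) ^ i' * L) := by
    rw [C_mul]; ring
  rw [h1, iterate_derivative_C_mul, eval_mul, eval_C, iterate_derivative_mul, eval_finset_sum]
  have h2 : ∀ s ∈ Finset.range i.succ,
      eval a (i.choose s • ((Polynomial.derivative^[i - s] ((X - C a) ^ i')) *
          Polynomial.derivative^[s] L))
        = (i.choose s : k) * ((if i' = i - s then (i'.factorial : k) else 0) *
            (Polynomial.derivative^[s] L).eval a) := by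
    intro s _
    rw [nsmul_eq_mul, eval_mul, eval_mul, eval_natCast, eval_iter_deriv_X_sub_pow]
  rw [Finset.sum_congr rfl h2]
  have hfac : ((i'.factorial : k)) ≠ 0 := Nat.cast_ne_zero.2 (Nat.factorial_ne_zero _)
  by_cases h : i' ≤ i
  · rw [Finset.sum_eq_single (i - i')]
    · rw [if_pos h, if_pos (by omega), Nat.choose_symm h]
      field_simp
    · intro s hs hne
      rw [if_neg (by simp at hs; omega), zero_mul, mul_zero]
    · intro hs
      simp at hs
  · rw [if_neg h, Finset.sum_eq_zero, mul_zero]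
    intro s hs
    rw [if_neg (by simp at hs; omega), zero_mul, mul_zero]

/-- The Hermite–Lagrange basis polynomial `L_j` with all multiplicities equal to `m`. -/
noncomputable def Lpoly {k : Type*} [Field k] {n : ℕ}
    (lam : Fin n → k) (m : ℕ) (t : Fin n) : Polynomial k :=
  ∏ i ∈ Finset.univ.erase t,
    Polynomial.C (((lam t - lam i) ^ m)⁻¹) * (X - C (lam i)) ^ m

/-- The lower triangular `m × m` matrix `Λ_j` with `(i,s)` entry `binom(i,s) L_j^{(i-s)}(λ_j)`. -/
noncomputable def LamMat {k : Type*} [Field k] {n : ℕ}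
    (lam : Fin n → k) (m : ℕ) (j : Fin n) : Matrix (Fin m) (Fin m) k :=
  Matrix.of fun i s =>
    if (s : ℕ) ≤ (i : ℕ) then
      ((i : ℕ).choose s : k) * (Polynomial.derivative^[(i : ℕ) - s] (Lpoly lam m j)).eval (lam j)
    else 0

theorem hermite_interpolant_derivative_values
    {k : Type*} [Field k] [CharZero k] {n m : ℕ}
    (lam : Fin n → k) (hlam : Function.Injective lam) (hm : 0 < m)
    (a : Fin n → Fin m → k) (c : Fin n → Fin m → k)
    (hc : ∀ j : Fin n, c j = ((LamMat lam m j)⁻¹).mulVec (a j)) :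
    let r : Polynomial k :=
      ∑ j, ∑ i : Fin m,
        C (c j i) * (C (((i : ℕ).factorial : k)⁻¹) * (X - C (lam j)) ^ (i : ℕ) * Lpoly lam m j)
    ∀ (j : Fin n) (i : Fin m),
      (Polynomial.derivative^[(i : ℕ)] r).eval (lam j)
        = ∑ s : Fin m,
            if (s : ℕ) ≤ (i : ℕ) then
              c j s * ((i : ℕ).choose s : k) *
                (Polynomial.derivative^[(i : ℕ) - s] (Lpoly lam m j)).eval (lam j)
            else 0 := by
  intro r j i
  show (Polynomial.derivative^[(i : ℕ)]
      (∑ t, ∑ i' : Fin m, C (c t i') *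
        (C (((i' : ℕ).factorial : k)⁻¹) * (X - C (lam t)) ^ (i' : ℕ) * Lpoly lam m t))).eval (lam j) = _
  rw [iterate_derivative_sum, eval_finset_sum, Finset.sum_eq_single j]
  · rw [iterate_derivative_sum, eval_finset_sum]
    refine Finset.sum_congr rfl fun s _ => ?_
    rw [diag_term]
  · intro t _ hne
    rw [iterate_derivative_sum, eval_finset_sum]
    refine Finset.sum_eq_zero fun s _ => ?_
    refine eval_iter_deriv_zero_of_dvd ?_ i.isLt
    have h1 : (X - C (lam j)) ^ m ∣ Lpoly lam m t := by
      refine dvd_trans (dvd_mul_left _ (C (((lam t - lam j) ^ m)⁻¹)))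
        (Finset.dvd_prod_of_mem _ ?_)
      exact Finset.mem_erase.2 ⟨hne.symm, Finset.mem_univ j⟩
    obtain ⟨q, hq⟩ := h1
    exact ⟨C (c t s) * (C (((s : ℕ).factorial : k)⁻¹) * (X - C (lam t)) ^ (s : ℕ)) * q,
      by rw [hq]; ring⟩
  · intro h; exact absurd (Finset.mem_univ j) h
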